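/- arXiv:1810.08562 — 2 statements merged into one kernel-verified Lean document; each statement's English description precedes it below -/
import Mathlib

section
/- Let f : ℝ₊ → ℝ₊ be continuous and increasing, and define ψ(θ) := sup_{x ≥ 0} (θ f'(x) - f(x)²/2) for a C¹ function f with f' nonnegative. If ψ(θ) < ∞ for all θ ≥ 0 and ψ(θ)/θ² → 0 as θ → ∞, then for every ε > 0 there exists a constant C_ε > 0 such that f(x) ≤ C_ε e^{εx} for all x ≥ 0. -/
theorem subexponential_growth_of_psi
    (f f' : ℝ → ℝ) (ψ : ℝ → ℝ)
    (hf_cont : ContinuousOn f (Set.Ici 0))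
    (hf_mono : StrictMonoOn f (Set.Ici 0))
    (hf_nonneg : ∀ x ≥ (0:ℝ), 0 ≤ f x)
    (hf_deriv : ∀ x ≥ (0:ℝ), HasDerivAt f (f' x) x)
    (hf'_nonneg : ∀ x ≥ (0:ℝ), 0 ≤ f' x)
    (hψ : ∀ θ ≥ (0:ℝ),
      IsLUB {y : ℝ | ∃ x : ℝ, 0 ≤ x ∧ y = θ * f' x - f x ^ 2 / 2} (ψ θ))
    (hlim : Filter.Tendsto (fun θ => ψ θ / θ ^ 2) Filter.atTop (nhds 0)) :
    ∀ ε > (0:ℝ), ∃ C > (0:ℝ), ∀ x ≥ (0:ℝ), f x ≤ C * Real.exp (ε * x) := by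
  intro ε hε
  have hε2 : (0:ℝ) < ε ^ 2 / 2 := by positivity
  obtain ⟨θ₁, hθ₁⟩ := Filter.eventually_atTop.mp (hlim.eventually (gt_mem_nhds hε2))
  set θ₀ : ℝ := max θ₁ 1 with hθ₀def
  have hθ₀pos : (0:ℝ) < θ₀ := lt_of_lt_of_le one_pos (le_max_right _ _)
  have hψθ : ∀ θ ≥ θ₀, ψ θ ≤ ε ^ 2 / 2 * θ ^ 2 := by
    intro θ hθ
    have hθpos : 0 < θ := lt_of_lt_of_le hθ₀pos hθ
    have h1 := hθ₁ θ (le_trans (le_max_left _ _) hθ)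
    have h2 := (div_lt_iff₀ (by positivity : (0:ℝ) < θ ^ 2)).mp h1
    nlinarith
  have hub : ∀ θ ≥ (0:ℝ), ∀ x ≥ (0:ℝ), θ * f' x - f x ^ 2 / 2 ≤ ψ θ := by
    intro θ hθ x hx
    exact (hψ θ hθ).1 ⟨x, hx, rfl⟩
  set B : ℝ := max (ψ θ₀ / θ₀ + ε ^ 2 * θ₀ / 2) 0 with hBdef
  have hBnn : 0 ≤ B := le_max_right _ _
  have hderiv_bound : ∀ x ≥ (0:ℝ), f' x ≤ ε * f x + B := by
    intro x hx
    have hfx := hf_nonneg x hx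
    by_cases hcase : ε * θ₀ ≤ f x
    · set θ : ℝ := f x / ε with hθdef
      have hθge : θ₀ ≤ θ := (le_div_iff₀ hε).mpr (by linarith [mul_comm ε θ₀])
      have hθpos : 0 < θ := lt_of_lt_of_le hθ₀pos hθge
      have h1 := hub θ (le_of_lt hθpos) x hx
      have h2 := hψθ θ hθge
      have hθeq : ε * θ = f x := by rw [hθdef]; field_simp
      have h3 : θ * f' x ≤ f x ^ 2 := by nlinarith
      have hfxpos : 0 < f x := lt_of_lt_of_le (by positivity) hcase
      have h4 : f' x ≤ ε * f x := by
        have h5 : f' x ≤ f x ^ 2 / θ :=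
          (le_div_iff₀ hθpos).mpr (by linarith [mul_comm θ (f' x)])
        calc f' x ≤ f x ^ 2 / θ := h5
          _ = ε * f x := by rw [hθdef]; field_simp [hfxpos.ne']
      linarith
    · push_neg at hcase
      have h1 := hub θ₀ (le_of_lt hθ₀pos) x hx
      have h2 : f' x ≤ (ψ θ₀ + ε ^ 2 * θ₀ ^ 2 / 2) / θ₀ := by
        rw [le_div_iff₀ hθ₀pos]
        nlinarith
      have h3 : (ψ θ₀ + ε ^ 2 * θ₀ ^ 2 / 2) / θ₀ = ψ θ₀ / θ₀ + ε ^ 2 * θ₀ / 2 := by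
        field_simp
      have h4 : f' x ≤ B := le_trans (h3 ▸ h2) (le_max_left _ _)
      nlinarith [mul_nonneg (le_of_lt hε) hfx]
  have hf0 : 0 ≤ f 0 := hf_nonneg 0 le_rfl
  refine ⟨f 0 + B / ε + 1, by positivity, ?_⟩
  intro x hx
  have key := norm_le_gronwallBound_of_norm_deriv_right_le
    (f := f) (f' := f') (δ := f 0) (K := ε) (ε := B) (a := 0) (b := x)
    (hf_cont.mono (fun t ht => ht.1))
    (fun t ht => (hf_deriv t ht.1).hasDerivWithinAt)
    (le_of_eq (Real.norm_of_nonneg hf0))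
    (fun t ht => by
      rw [Real.norm_of_nonneg (hf'_nonneg t ht.1), Real.norm_of_nonneg (hf_nonneg t ht.1)]
      exact hderiv_bound t ht.1)
    x ⟨hx, le_rfl⟩
  rw [Real.norm_of_nonneg (hf_nonneg x hx), gronwallBound_of_K_ne_0 (ne_of_gt hε)] at key
  simp only [sub_zero] at key
  have hexp1 : 1 ≤ Real.exp (ε * x) :=
    Real.one_le_exp (by positivity)
  have hBε : 0 ≤ B / ε := by positivity
  nlinarith [mul_nonneg hBε (Real.exp_pos (ε * x)).le]
end

section
/- With the notation above, let φ^a_t(0) be the flow of x' = b(x)+a started at 0. Then γ(a)^{-1} = ∫_0^∞ exp(-∫_0^t f(φ^a_u(0)) du) dt; in particular a ↦ γ(a) is non-decreasing. -/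
/-!
With `g` the flow of `x' = b(x) + a` from `0`, the substitution `x = g(t)`, `dx = (b(x) + a) dt`,
turns `(b + a)⁻¹ exp(-∫₀ˣ f/(b + a))` on `[0, σ_a)` into `exp(-∫₀ᵗ f(g))` on `(0, ∞)`. It is a
bijection: the flow never reaches the zero `σ_a` of `b + a` (an equilibrium of a locally Lipschitz
field is not reached in finite time), and it passes every point of `[0, σ_a)` since its speed is
bounded below there on compacts. A larger `a` gives a larger flow by comparison, hence a larger
`f ∘ g`, a smaller integral and a larger `γ(a)`.
-/

open MeasureTheory

/-- The (unnormalized) density of the invariant measure: `(b x + a)⁻¹ exp(-∫_0^x f/(b+a))`. -/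
noncomputable def invDensityBase (b f : ℝ → ℝ) (a x : ℝ) : ℝ :=
  (b x + a)⁻¹ * Real.exp (-∫ y in (0:ℝ)..x, f y / (b y + a))

/-- The support region `[0, σ_a)` where `σ_a = inf {x ≥ 0 : b x + a = 0}`. -/
def supportSet (b : ℝ → ℝ) (a : ℝ) : Set ℝ :=
  {x : ℝ | 0 ≤ x ∧ ∀ y ∈ Set.Icc 0 x, 0 < b y + a}

/-- The normalization constant `γ(a)`. -/
noncomputable def gammaConst (b f : ℝ → ℝ) (a : ℝ) : ℝ :=
  (∫ x in supportSet b a, invDensityBase b f a x)⁻¹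

open Set Filter Topology

theorem eventuallyEq_const_of_hasDerivAt_of_eq_zero {E : Type*} [NormedAddCommGroup E]
    [NormedSpace ℝ E] {v : E → E} {g : ℝ → E} {τ : ℝ} (hv : LocallyLipschitz v)
    (hg : ∀ᶠ t in 𝓝 τ, HasDerivAt g (v (g t)) t) (hτ : v (g τ) = 0) :
    g =ᶠ[𝓝 τ] fun _ ↦ g τ := by
  obtain ⟨K, U, hU, hK⟩ := hv (g τ)
  have hgU : ∀ᶠ t in 𝓝 τ, g t ∈ U := hg.self_of_nhds.continuousAt.eventually_mem hU
  refine ODE_solution_unique_of_eventually (v := fun _ ↦ v) (s := fun _ ↦ U)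
    (Eventually.of_forall fun _ ↦ hK) (hg.and hgU)
    (Eventually.of_forall fun t ↦ ⟨?_, mem_of_mem_nhds hU⟩) rfl
  simpa only [hτ] using hasDerivAt_const t (g τ)

section AutonomousODE

variable {v g : ℝ → ℝ}

/-- A zero of `v` reached by `g` is an equilibrium, so by uniqueness `g` is constant around the
hitting time: the set of hitting times is open as well as closed, hence empty. -/
theorem pos_of_hasDerivAt_comp (hv : LocallyLipschitz v)
    (hg : ∀ t ≥ 0, HasDerivAt g (v (g t)) t) (h0 : 0 < v (g 0)) : ∀ t ≥ 0, 0 < v (g t) := by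
  have hcont : ContinuousOn (fun t ↦ v (g t)) (Ici 0) :=
    hv.continuous.comp_continuousOn (HasDerivAt.continuousOn hg)
  set Z := Ici 0 ∩ (fun t ↦ v (g t)) ⁻¹' {0}
  have hZ_closed : IsClosed Z := hcont.preimage_isClosed_of_isClosed isClosed_Ici isClosed_singleton
  have hZ_open : IsOpen Z := by
    refine isOpen_iff_mem_nhds.2 fun τ hτ ↦ ?_
    have hτ_pos : 0 < τ := hτ.1.lt_of_ne fun h ↦ h0.ne' (h ▸ hτ.2)
    have hconst := eventuallyEq_const_of_hasDerivAt_of_eq_zero hv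
      ((eventually_gt_nhds hτ_pos).mono fun t ht ↦ hg t ht.le) hτ.2
    filter_upwards [eventually_gt_nhds hτ_pos, hconst] with t ht hgt
    exact ⟨ht.le, by simpa only [mem_preimage, hgt] using hτ.2⟩
  have hZ_empty : Z = ∅ := (isClopen_iff.1 ⟨hZ_closed, hZ_open⟩).resolve_right fun h ↦
    absurd (h ▸ mem_univ (-1 : ℝ) : (-1 : ℝ) ∈ Z).1 (by norm_num)
  intro t ht
  by_contra! hle
  obtain ⟨s, hs, hs0⟩ := intermediate_value_Icc' ht (hcont.mono Icc_subset_Ici_self) ⟨hle, h0.le⟩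
  exact hZ_empty.subset ⟨hs.1, hs0⟩

theorem strictMonoOn_of_hasDerivAt_comp_pos (hg : ∀ t ≥ 0, HasDerivAt g (v (g t)) t)
    (hpos : ∀ t ≥ 0, 0 < v (g t)) : StrictMonoOn g (Ici 0) :=
  strictMonoOn_of_hasDerivWithinAt_pos (convex_Ici 0) (HasDerivAt.continuousOn hg)
    (fun t ht ↦ (hg t (interior_subset ht)).hasDerivWithinAt) fun t ht ↦ hpos t (interior_subset ht)

theorem le_of_hasDerivAt_comp_of_lt {v₁ v₂ g₁ g₂ : ℝ → ℝ} (hv : ∀ x, v₁ x < v₂ x)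
    (h0 : g₁ 0 ≤ g₂ 0) (hg₁ : ∀ t ≥ 0, HasDerivAt g₁ (v₁ (g₁ t)) t)
    (hg₂ : ∀ t ≥ 0, HasDerivAt g₂ (v₂ (g₂ t)) t) : ∀ t ≥ 0, g₁ t ≤ g₂ t := fun _ ht ↦
  image_le_of_deriv_right_lt_deriv_boundary' (HasDerivAt.continuousOn fun s hs ↦ hg₁ s hs.1)
    (fun s hs ↦ (hg₁ s hs.1).hasDerivWithinAt) h0
    (HasDerivAt.continuousOn fun s hs ↦ hg₂ s hs.1) (fun s hs ↦ (hg₂ s hs.1).hasDerivWithinAt)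
    (fun _ _ hs ↦ hs ▸ hv _) ⟨ht, le_rfl⟩

theorem nonneg_of_hasDerivAt_comp_pos (hg0 : g 0 = 0) (hg : ∀ t ≥ 0, HasDerivAt g (v (g t)) t)
    (hpos : ∀ t ≥ 0, 0 < v (g t)) : ∀ t ≥ 0, 0 ≤ g t := fun _ ht ↦
  hg0 ▸ (strictMonoOn_of_hasDerivAt_comp_pos hg hpos).monotoneOn self_mem_Ici ht ht

end AutonomousODE

section ExpNegPrimitive

variable {F : ℝ → ℝ}

theorem intervalIntegrable_of_continuousOn_Ici (hF : ContinuousOn F (Ici 0)) {s t : ℝ}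
    (hs : 0 ≤ s) (ht : 0 ≤ t) : IntervalIntegrable F volume s t :=
  (hF.mono fun _ hx ↦ (le_min hs ht).trans hx.1).intervalIntegrable

theorem continuousOn_integral_of_continuousOn_Ici (hF : ContinuousOn F (Ici 0)) :
    ContinuousOn (fun t ↦ ∫ u in (0:ℝ)..t, F u) (Ioi 0) := fun t ht ↦
  (intervalIntegral.integral_hasDerivAt_right
    (intervalIntegrable_of_continuousOn_Ici hF le_rfl (le_of_lt ht))
    ((hF.mono Ioi_subset_Ici_self).stronglyMeasurableAtFilter isOpen_Ioi t ht)
    (hF.continuousAt (Ici_mem_nhds ht))).continuousAt.continuousWithinAt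

/-- Once `F` reaches the level `F T > 0` it stays above it, so `∫₀ᵗ F ≥ F T * (t - T)` and the
integrand decays exponentially. -/
theorem integrableOn_exp_neg_integral_of_monotoneOn (hF : ContinuousOn F (Ici 0))
    (hmono : MonotoneOn F (Ici 0)) (hF0 : 0 ≤ F 0) {T : ℝ} (hT : 0 ≤ T) (hFT : 0 < F T) :
    IntegrableOn (fun t ↦ Real.exp (-∫ u in (0:ℝ)..t, F u)) (Ioi 0) := by
  have hF_nonneg : ∀ u ≥ 0, 0 ≤ F u := fun u hu ↦ hF0.trans (hmono self_mem_Ici hu hu)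
  have hlower : ∀ t ≥ 0, F T * (t - T) ≤ ∫ u in (0:ℝ)..t, F u := by
    intro t ht
    have hint_nonneg : ∀ {s}, 0 ≤ s → 0 ≤ ∫ u in (0:ℝ)..s, F u := fun hs ↦
      intervalIntegral.integral_nonneg hs fun u hu ↦ hF_nonneg u hu.1
    rcases le_total t T with htT | hTt
    · nlinarith [hint_nonneg ht]
    · have hsplit := intervalIntegral.integral_add_adjacent_intervals
        (intervalIntegrable_of_continuousOn_Ici hF le_rfl hT)
        (intervalIntegrable_of_continuousOn_Ici hF hT ht)
      have htail : ∫ _ in T..t, F T ≤ ∫ u in T..t, F u :=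
        intervalIntegral.integral_mono_on hTt intervalIntegrable_const
          (intervalIntegrable_of_continuousOn_Ici hF hT ht)
          fun u hu ↦ hmono hT (hT.trans hu.1) hu.1
      rw [intervalIntegral.integral_const, smul_eq_mul] at htail
      linarith [hint_nonneg hT]
  refine ((exp_neg_integrableOn_Ioi 0 hFT).const_mul (Real.exp (F T * T))).mono'
    ((continuousOn_integral_of_continuousOn_Ici hF).neg.rexp.aestronglyMeasurable
      measurableSet_Ioi) ?_
  filter_upwards [ae_restrict_mem measurableSet_Ioi] with t ht
  rw [Real.norm_of_nonneg (Real.exp_pos _).le, ← Real.exp_add]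
  exact Real.exp_le_exp.2 (by linarith [hlower t (le_of_lt ht)])

theorem setIntegral_exp_neg_integral_anti {G : ℝ → ℝ} (hF : ContinuousOn F (Ici 0))
    (hG : ContinuousOn G (Ici 0)) (hFG : ∀ u ≥ 0, F u ≤ G u)
    (hint : IntegrableOn (fun t ↦ Real.exp (-∫ u in (0:ℝ)..t, F u)) (Ioi 0)) :
    ∫ t in Ioi 0, Real.exp (-∫ u in (0:ℝ)..t, G u) ≤
      ∫ t in Ioi 0, Real.exp (-∫ u in (0:ℝ)..t, F u) := by
  refine integral_mono_of_nonneg (Eventually.of_forall fun _ ↦ (Real.exp_pos _).le) hint ?_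
  filter_upwards [ae_restrict_mem measurableSet_Ioi] with t ht
  have ht : 0 ≤ t := le_of_lt ht
  exact Real.exp_le_exp.2 <| neg_le_neg <| intervalIntegral.integral_mono_on ht
    (intervalIntegrable_of_continuousOn_Ici hF le_rfl ht)
    (intervalIntegrable_of_continuousOn_Ici hG le_rfl ht) fun u hu ↦ hFG u hu.1

end ExpNegPrimitive

section Flow

variable {b f g : ℝ → ℝ} {a : ℝ}

theorem supportSet_eq_image (hb : Continuous b) (hg0 : g 0 = 0)
    (hg : ∀ t ≥ 0, HasDerivAt g (b (g t) + a) t) (hpos : ∀ t ≥ 0, 0 < b (g t) + a) :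
    supportSet b a = g '' Ici 0 := by
  have hgc : ContinuousOn g (Ici 0) := HasDerivAt.continuousOn hg
  have hg_nonneg := nonneg_of_hasDerivAt_comp_pos (v := (b · + a)) hg0 hg hpos
  have hivt : ∀ t ≥ 0, Icc 0 (g t) ⊆ g '' Icc 0 t := fun t ht ↦ by
    simpa only [hg0] using intermediate_value_Icc ht (hgc.mono Icc_subset_Ici_self)
  ext x
  constructor
  · rintro ⟨hx0, hx⟩
    obtain ⟨y, hy, hy_min⟩ := isCompact_Icc.exists_isMinOn (nonempty_Icc.2 hx0)
      (hb.continuousOn.add continuousOn_const (f := b) (g := fun _ ↦ a))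
    set ε := b y + a
    have hε : 0 < ε := hx y hy
    -- while `g` stays below `x` its speed is at least `ε`, so it passes `x` by time `(x + 1) / ε`
    obtain ⟨T, hT, hxT⟩ : ∃ T ≥ 0, x ≤ g T := by
      by_contra! hbelow
      have hT : 0 < (x + 1) / ε := by positivity
      obtain ⟨c, hc, hslope⟩ := exists_hasDerivAt_eq_slope g (fun t ↦ b (g t) + a) hT
        (HasDerivAt.continuousOn fun s hs ↦ hg s hs.1) fun s hs ↦ hg s hs.1.le
      have hεc : ε ≤ (g ((x + 1) / ε) - g 0) / ((x + 1) / ε - 0) :=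
        hslope ▸ hy_min ⟨hg_nonneg c hc.1.le, (hbelow c hc.1.le).le⟩
      rw [le_div_iff₀ (by simpa using hT), hg0, mul_sub, mul_div_cancel₀ _ hε.ne'] at hεc
      linarith [hbelow _ hT.le]
    obtain ⟨s, hs, rfl⟩ := hivt T hT ⟨hx0, hxT⟩
    exact ⟨s, hs.1, rfl⟩
  · rintro ⟨t, ht, rfl⟩
    refine ⟨hg_nonneg t ht, fun y hy ↦ ?_⟩
    obtain ⟨s, hs, rfl⟩ := hivt t ht hy
    exact hpos s hs.1

theorem integral_div_eq_integral_comp_flow (hb : Continuous b) (hf : ContinuousOn f (Ici 0))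
    (hg0 : g 0 = 0) (hg : ∀ t ≥ 0, HasDerivAt g (b (g t) + a) t)
    (hpos : ∀ t ≥ 0, 0 < b (g t) + a) {t : ℝ} (ht : 0 ≤ t) :
    ∫ y in (0:ℝ)..g t, f y / (b y + a) = ∫ u in (0:ℝ)..t, f (g u) := by
  have hsub : ∀ s ∈ uIcc 0 t, 0 ≤ s := fun s hs ↦ (uIcc_of_le ht ▸ hs).1
  have hmaps : MapsTo g (uIcc 0 t) (Ici 0) := fun s hs ↦
    nonneg_of_hasDerivAt_comp_pos (v := (b · + a)) hg0 hg hpos s (hsub s hs)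
  have hsubst := intervalIntegral.integral_deriv_smul_comp' (f := g) (g := fun y ↦ f y / (b y + a))
    (fun s hs ↦ hg s (hsub s hs))
    ((hb.comp_continuousOn (HasDerivAt.continuousOn fun s hs ↦ hg s (hsub s hs))).add
      continuousOn_const)
    ((hf.mono hmaps.image_subset).div (hb.continuousOn.add continuousOn_const)
      (by rintro _ ⟨s, hs, rfl⟩; exact (hpos s (hsub s hs)).ne'))
  rw [hg0] at hsubst
  rw [← hsubst]
  refine intervalIntegral.integral_congr fun s hs ↦ ?_
  have := (hpos s (hsub s hs)).ne'
  simp only [Function.comp_apply, smul_eq_mul]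
  field_simp

theorem integral_invDensityBase_eq (hb : Continuous b) (hf : ContinuousOn f (Ici 0))
    (hg0 : g 0 = 0) (hg : ∀ t ≥ 0, HasDerivAt g (b (g t) + a) t)
    (hpos : ∀ t ≥ 0, 0 < b (g t) + a) :
    ∫ x in supportSet b a, invDensityBase b f a x =
      ∫ t in Ioi 0, Real.exp (-∫ u in (0:ℝ)..t, f (g u)) := by
  have hinj : InjOn g (Ioi 0) :=
    (strictMonoOn_of_hasDerivAt_comp_pos (v := (b · + a)) hg hpos).injOn.mono Ioi_subset_Ici_self
  rw [supportSet_eq_image hb hg0 hg hpos, ← Ioi_insert, image_insert_eq,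
    setIntegral_congr_set (insert_ae_eq_self (g 0) _),
    integral_image_eq_integral_abs_deriv_smul measurableSet_Ioi
      (fun t ht ↦ (hg t (le_of_lt ht)).hasDerivWithinAt) hinj]
  refine setIntegral_congr_fun measurableSet_Ioi fun t ht ↦ ?_
  have ht : 0 ≤ t := le_of_lt ht
  rw [invDensityBase, integral_div_eq_integral_comp_flow hb hf hg0 hg hpos ht, smul_eq_mul,
    abs_of_pos (hpos t ht), mul_inv_cancel_left₀ (hpos t ht).ne']

theorem gammaConst_eq_inv_integral (hb : Continuous b) (hf : ContinuousOn f (Ici 0))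
    (hg0 : g 0 = 0) (hg : ∀ t ≥ 0, HasDerivAt g (b (g t) + a) t)
    (hpos : ∀ t ≥ 0, 0 < b (g t) + a) :
    gammaConst b f a = (∫ t in Ioi 0, Real.exp (-∫ u in (0:ℝ)..t, f (g u)))⁻¹ := by
  rw [gammaConst, integral_invDensityBase_eq hb hf hg0 hg hpos]

theorem integrableOn_exp_neg_integral_comp_flow (hf : ContinuousOn f (Ici 0))
    (hf_mono : StrictMonoOn f (Ici 0)) (hf0 : f 0 = 0) (hg0 : g 0 = 0)
    (hg : ∀ t ≥ 0, HasDerivAt g (b (g t) + a) t) (hpos : ∀ t ≥ 0, 0 < b (g t) + a) :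
    IntegrableOn (fun t ↦ Real.exp (-∫ u in (0:ℝ)..t, f (g u))) (Ioi 0) := by
  have hg_mono := strictMonoOn_of_hasDerivAt_comp_pos (v := (b · + a)) hg hpos
  have hmaps : MapsTo g (Ici 0) (Ici 0) :=
    nonneg_of_hasDerivAt_comp_pos (v := (b · + a)) hg0 hg hpos
  refine integrableOn_exp_neg_integral_of_monotoneOn (hf.comp (HasDerivAt.continuousOn hg) hmaps)
    (hf_mono.monotoneOn.comp hg_mono.monotoneOn hmaps) (by simp [hg0, hf0]) zero_le_one ?_
  rw [← hf0, ← hg0]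
  exact hf_mono (hmaps self_mem_Ici) (hmaps (mem_Ici.2 zero_le_one))
    (hg_mono self_mem_Ici (mem_Ici.2 zero_le_one) one_pos)

theorem setIntegral_exp_neg_integral_comp_flow_anti {a₁ a₂ : ℝ} {g₁ g₂ : ℝ → ℝ}
    (hf : ContinuousOn f (Ici 0)) (hf_mono : StrictMonoOn f (Ici 0)) (hf0 : f 0 = 0)
    (ha : a₁ < a₂) (hg₁0 : g₁ 0 = 0) (hg₂0 : g₂ 0 = 0)
    (hg₁ : ∀ t ≥ 0, HasDerivAt g₁ (b (g₁ t) + a₁) t)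
    (hg₂ : ∀ t ≥ 0, HasDerivAt g₂ (b (g₂ t) + a₂) t)
    (hpos₁ : ∀ t ≥ 0, 0 < b (g₁ t) + a₁) :
    ∫ t in Ioi 0, Real.exp (-∫ u in (0:ℝ)..t, f (g₂ u)) ≤
      ∫ t in Ioi 0, Real.exp (-∫ u in (0:ℝ)..t, f (g₁ u)) := by
  have hle : ∀ t ≥ 0, g₁ t ≤ g₂ t :=
    le_of_hasDerivAt_comp_of_lt (v₁ := (b · + a₁)) (v₂ := (b · + a₂)) (fun _ ↦ by simpa using ha)
      (hg₁0.trans hg₂0.symm).le hg₁ hg₂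
  have hmaps₁ : MapsTo g₁ (Ici 0) (Ici 0) :=
    nonneg_of_hasDerivAt_comp_pos (v := (b · + a₁)) hg₁0 hg₁ hpos₁
  have hmaps₂ : MapsTo g₂ (Ici 0) (Ici 0) := fun t ht ↦ (hmaps₁ ht).trans (hle t ht)
  exact setIntegral_exp_neg_integral_anti (hf.comp (HasDerivAt.continuousOn hg₁) hmaps₁)
    (hf.comp (HasDerivAt.continuousOn hg₂) hmaps₂)
    (fun t ht ↦ hf_mono.monotoneOn (hmaps₁ ht) (hmaps₂ ht) (hle t ht))
    (integrableOn_exp_neg_integral_comp_flow hf hf_mono hf0 hg₁0 hg₁ hpos₁)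

end Flow

theorem gammaConst_inv_eq_integral_and_monotone_general
    (b f : ℝ → ℝ)
    (hb_lip : LocallyLipschitz b) (hb0 : 0 < b 0)
    (hf_cont : ContinuousOn f (Set.Ici 0))
    (hf_mono : StrictMonoOn f (Set.Ici 0))
    (hf0 : f 0 = 0)
    (φ : ℝ → ℝ → ℝ)  -- φ a t : flow of x' = b(x) + a at time t, started at 0
    (hφ_init : ∀ a ≥ (0:ℝ), φ a 0 = 0)
    (hφ_deriv : ∀ a ≥ (0:ℝ), ∀ t ≥ (0:ℝ), HasDerivAt (φ a) (b (φ a t) + a) t) :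
    (∀ a ≥ (0:ℝ), (gammaConst b f a)⁻¹ =
      ∫ t in Set.Ioi (0:ℝ), Real.exp (-∫ u in (0:ℝ)..t, f (φ a u))) ∧
    (∀ a₁ a₂ : ℝ, 0 ≤ a₁ → a₁ ≤ a₂ → gammaConst b f a₁ ≤ gammaConst b f a₂) := by
  have hpos : ∀ a ≥ (0:ℝ), ∀ t ≥ 0, 0 < b (φ a t) + a := fun a ha ↦
    pos_of_hasDerivAt_comp (v := (b · + a))
      ((isometry_add_right a).lipschitz.locallyLipschitz.comp hb_lip) (hφ_deriv a ha)
      (by rw [hφ_init a ha]; linarith)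
  have hγ : ∀ a ≥ (0:ℝ), gammaConst b f a = _ := fun a ha ↦
    gammaConst_eq_inv_integral hb_lip.continuous hf_cont (hφ_init a ha) (hφ_deriv a ha) (hpos a ha)
  refine ⟨fun a ha ↦ by rw [hγ a ha, inv_inv], fun a₁ a₂ h₁ h₁₂ ↦ ?_⟩
  obtain rfl | hlt := h₁₂.eq_or_lt
  · rfl
  have h₂ := h₁.trans h₁₂
  have : NeZero (volume.restrict (Ioi (0:ℝ))) := ⟨by simp [Measure.restrict_eq_zero]⟩
  rw [hγ a₁ h₁, hγ a₂ h₂]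
  exact inv_anti₀ (integral_exp_pos (integrableOn_exp_neg_integral_comp_flow hf_cont hf_mono hf0
    (hφ_init a₂ h₂) (hφ_deriv a₂ h₂) (hpos a₂ h₂)))
    (setIntegral_exp_neg_integral_comp_flow_anti hf_cont hf_mono hf0 hlt (hφ_init a₁ h₁)
      (hφ_init a₂ h₂) (hφ_deriv a₁ h₁) (hφ_deriv a₂ h₂) (hpos a₁ h₁))

theorem gammaConst_inv_eq_integral_and_monotone
    (b f : ℝ → ℝ) (Cb : ℝ)
    (hb_lip : LocallyLipschitz b) (hb0 : 0 < b 0)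
    (hb_bound : ∀ x ≥ (0:ℝ), b x ≤ Cb)
    (hf_cont : ContinuousOn f (Set.Ici 0))
    (hf_mono : StrictMonoOn f (Set.Ici 0))
    (hf0 : f 0 = 0)
    (φ : ℝ → ℝ → ℝ)  -- φ a t : flow of x' = b(x) + a at time t, started at 0
    (hφ_init : ∀ a ≥ (0:ℝ), φ a 0 = 0)
    (hφ_deriv : ∀ a ≥ (0:ℝ), ∀ t ≥ (0:ℝ), HasDerivAt (φ a) (b (φ a t) + a) t) :
    (∀ a ≥ (0:ℝ), (gammaConst b f a)⁻¹ =
      ∫ t in Set.Ioi (0:ℝ), Real.exp (-∫ u in (0:ℝ)..t, f (φ a u))) ∧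
    (∀ a₁ a₂ : ℝ, 0 ≤ a₁ → a₁ ≤ a₂ → gammaConst b f a₁ ≤ gammaConst b f a₂) :=
  gammaConst_inv_eq_integral_and_monotone_general b f hb_lip hb0 hf_cont hf_mono hf0 φ hφ_init
    hφ_deriv
end
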